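/- Let α : T → S be a guarded monad morphism between guarded pre-iterative monads T and S, where S is guarded iterative. Then α is iteration-preserving: for every inr-guarded f : X → T(Y+X), α∘f† = (α∘f)†. -/

import Mathlib

open CategoryTheory CategoryTheory.Limits

universe v u

/-- `(σ, σ')` form a binary coproduct cospan, i.e. a summand together with its complement. -/
def IsCoprodCospan {C : Type u} [Category.{v} C] {Y' Y'' Y : C}
    (σ : Y' ⟶ Y) (σ' : Y'' ⟶ Y) : Prop :=
  Nonempty (IsColimit (BinaryCofan.mk σ σ'))

/-- A monad on `C`, presented as a Kleisli triple. -/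
structure KMonad (C : Type u) [Category.{v} C] where
  obj : C → C
  η : ∀ X : C, X ⟶ obj X
  bind : ∀ {X Y : C}, (X ⟶ obj Y) → (obj X ⟶ obj Y)
  η_bind : ∀ {X Y : C} (f : X ⟶ obj Y), η X ≫ bind f = f
  bind_η : ∀ X : C, bind (η X) = 𝟙 (obj X)
  bind_comp : ∀ {X Y Z : C} (f : X ⟶ obj Y) (g : Y ⟶ obj Z),
      bind (f ≫ bind g) = bind f ≫ bind g

/-- An abstractly guarded monad: its Kleisli category carries a notion of abstract
guardedness, i.e. a relation `guarded f σ σ'` between Kleisli morphisms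
`f : X ⟶ obj Y` and summands `σ : Y' ⟶ Y` (with chosen complement `σ' : Y'' ⟶ Y`)
closed under the rules (trv), (par) and (cmp), where the coproducts in the Kleisli
category are inherited from `C` (with injections `η ∘ inj`). -/
structure GMonad (C : Type u) [Category.{v} C] extends KMonad C where
  guarded : ∀ {X Y' Y'' Y : C}, (X ⟶ obj Y) → (Y' ⟶ Y) → (Y'' ⟶ Y) → Prop
  trv : ∀ {X Y Z P : C} (i₁ : Y ⟶ P) (i₂ : Z ⟶ P), IsCoprodCospan i₁ i₂ →
      ∀ f : X ⟶ obj Y, guarded (f ≫ bind (i₁ ≫ η P)) i₂ i₁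
  par : ∀ {X Y P Z' Z'' Z : C} (j₁ : X ⟶ P) (j₂ : Y ⟶ P), IsCoprodCospan j₁ j₂ →
      ∀ (σ : Z' ⟶ Z) (σ' : Z'' ⟶ Z) (u : P ⟶ obj Z),
      guarded (j₁ ≫ u) σ σ' → guarded (j₂ ≫ u) σ σ' → guarded u σ σ'
  cmp : ∀ {X Y Z P V' V'' V : C} (i₁ : Y ⟶ P) (i₂ : Z ⟶ P), IsCoprodCospan i₁ i₂ →
      ∀ (σ : V' ⟶ V) (σ' : V'' ⟶ V) (f : X ⟶ obj P) (u : P ⟶ obj V),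
      guarded f i₂ i₁ → guarded (i₁ ≫ u) σ σ' → guarded (f ≫ bind u) σ σ'

/-- A guarded pre-iterative monad: every `inr`-guarded `f : X ⟶ T(Y+X)` has a chosen
solution `iter f hf` satisfying the fixpoint identity `f† = [η, f†]* ∘ f`. -/
structure PIMonad (C : Type u) [Category.{v} C] [HasBinaryCoproducts C]
    extends GMonad C where
  iter : ∀ {X Y : C} (f : X ⟶ obj (Y ⨿ X)),
      guarded f (coprod.inr : X ⟶ Y ⨿ X) coprod.inl → (X ⟶ obj Y)
  iter_fixpoint : ∀ {X Y : C} (f : X ⟶ obj (Y ⨿ X))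
      (hf : guarded f (coprod.inr : X ⟶ Y ⨿ X) coprod.inl),
      iter f hf = f ≫ bind (coprod.desc (η Y) (iter f hf))

/-- A guarded iterative monad: solutions of `inr`-guarded morphisms are unique. -/
structure IMonad (C : Type u) [Category.{v} C] [HasBinaryCoproducts C]
    extends PIMonad C where
  iter_unique : ∀ {X Y : C} (f : X ⟶ obj (Y ⨿ X))
      (hf : guarded f (coprod.inr : X ⟶ Y ⨿ X) coprod.inl) (s : X ⟶ obj Y),
      s = f ≫ bind (coprod.desc (η Y) s) → s = iter f hf

/-- A monad morphism, in Kleisli-triple form. -/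
structure KMonadHom {C : Type u} [Category.{v} C] (T S : KMonad C) where
  app : ∀ X : C, T.obj X ⟶ S.obj X
  app_η : ∀ X : C, T.η X ≫ app X = S.η X
  app_bind : ∀ (X Y : C) (f : X ⟶ T.obj Y),
      T.bind f ≫ app Y = app X ≫ S.bind (f ≫ app Y)

/-- A guarded monad morphism: a monad morphism that preserves guardedness. -/
structure GMonadHom {C : Type u} [Category.{v} C] (T S : GMonad C)
    extends KMonadHom T.toKMonad S.toKMonad where
  app_guarded : ∀ (X Y' Y'' Y : C) (f : X ⟶ T.obj Y) (σ : Y' ⟶ Y) (σ' : Y'' ⟶ Y),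
      T.guarded f σ σ' → S.guarded (f ≫ app Y) σ σ'

/-! Monad morphisms carry solutions of `f` to solutions of `α ∘ f`; since `S` is guarded
iterative, `(α ∘ f)†` is the only solution of `α ∘ f`, so it must be `α ∘ f†`. -/

section

variable {C : Type u} [Category.{v} C] [HasBinaryCoproducts C]

def KMonad.IsSolution (T : KMonad C) {X Y : C} (f : X ⟶ T.obj (Y ⨿ X)) (s : X ⟶ T.obj Y) :
    Prop :=
  s = f ≫ T.bind (coprod.desc (T.η Y) s)

namespace KMonadHom

variable {T S : KMonad C} (α : KMonadHom T S)

theorem desc_η_comp_app {X Y : C} (s : X ⟶ T.obj Y) :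
    coprod.desc (T.η Y) s ≫ α.app Y = coprod.desc (S.η Y) (s ≫ α.app Y) := by
  rw [coprod.desc_comp, α.app_η]

theorem isSolution_comp_app {X Y : C} {f : X ⟶ T.obj (Y ⨿ X)} {s : X ⟶ T.obj Y}
    (hs : T.IsSolution f s) : S.IsSolution (f ≫ α.app (Y ⨿ X)) (s ≫ α.app Y) := by
  unfold KMonad.IsSolution at hs ⊢
  calc s ≫ α.app Y
      = f ≫ T.bind (coprod.desc (T.η Y) s) ≫ α.app Y := by
        rw [← Category.assoc, ← hs]
    _ = (f ≫ α.app (Y ⨿ X)) ≫ S.bind (coprod.desc (S.η Y) (s ≫ α.app Y)) := by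
        rw [α.app_bind, α.desc_η_comp_app, Category.assoc]

end KMonadHom

end

theorem guarded_hom_iteration_preserving {C : Type u} [Category.{v} C]
    [HasBinaryCoproducts C] (T : PIMonad C) (S : IMonad C)
    (α : GMonadHom T.toGMonad S.toGMonad)
    (X Y : C) (f : X ⟶ T.obj (Y ⨿ X))
    (hf : T.guarded f (coprod.inr : X ⟶ Y ⨿ X) coprod.inl)
    (hαf : S.guarded (f ≫ α.app (Y ⨿ X)) (coprod.inr : X ⟶ Y ⨿ X) coprod.inl) :
    T.iter f hf ≫ α.app Y = S.iter (f ≫ α.app (Y ⨿ X)) hαf :=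
  S.iter_unique _ hαf _ (α.isSolution_comp_app (T.iter_fixpoint f hf))
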